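/- Soundness of the min-weight extraction: In the and-or explanation tree T with weight function W_T (atom vertex: min of children's weights; rule vertex: 1 plus sum of children's weights), the subtree obtained by starting at the root and recursively selecting, for each atom vertex, one child of minimum weight, and for each rule vertex, all children, is an explanation tree whose number of rule vertices equals W_T(root); hence it yields a shortest explanation. -/

import Mathlib

/-- A ground normal rule: head atom, positive body atoms, negative body atoms. -/
structure Rule (α : Type) where
  head : α
  pos : Finset α
  neg : Finset α

/-- Finite rose trees with vertex labels in `L`; a vertex of a tree is identified
with the subtree hanging from it. -/
inductive RTree (L : Type) : Type
  | node : L → List (RTree L) → RTree L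

namespace RTree

def label {L : Type} : RTree L → L
  | node l _ => l

def children {L : Type} : RTree L → List (RTree L)
  | node _ cs => cs

end RTree

/-- Rule `r` supports atom `p` using atoms in `X` but not in `Z`:
`H(r) = p`, `B⁺(r) ⊆ X \ Z` and `B⁻(r) ∩ X = ∅`. -/
def Supports {α : Type} (X Z : Set α) (r : Rule α) (p : α) : Prop :=
  r.head = p ∧ ↑r.pos ⊆ X \ Z ∧ ∀ a ∈ r.neg, a ∉ X

/-- `IsAOTNode P X Z t`: `t` is (a node of) the and-or explanation tree w.r.t.
program `P` and answer set `X`, where `Z` is the set of atoms labeling the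
ancestor atom vertices.  An atom vertex labeled `p` has one rule-vertex child for
each rule of `P` supporting `p` using atoms in `X` but not in `insert p Z` (and
only such children), and has at least one child (so that every leaf is a rule
vertex); a rule vertex labeled `r` has one atom-vertex child for each atom of
`B⁺(r)` (and only such children). -/
inductive IsAOTNode {α : Type} (P : Set (Rule α)) (X : Set α) :
    Set α → RTree (α ⊕ Rule α) → Prop
  | atom {Z : Set α} {p : α} {cs : List (RTree (α ⊕ Rule α))}
      (hp : p ∈ X) (hne : cs ≠ [])
      (hcomplete : ∀ r ∈ P, Supports X (insert p Z) r p →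
        ∃ c ∈ cs, RTree.label c = Sum.inr r)
      (hsound : ∀ c ∈ cs,
        ∃ r ∈ P, Supports X (insert p Z) r p ∧ RTree.label c = Sum.inr r)
      (hrec : ∀ c ∈ cs, IsAOTNode P X (insert p Z) c) :
      IsAOTNode P X Z (.node (.inl p) cs)
  | rule {Z : Set α} {r : Rule α} {cs : List (RTree (α ⊕ Rule α))}
      (hcomplete : ∀ a ∈ r.pos, ∃ c ∈ cs, RTree.label c = Sum.inl a)
      (hsound : ∀ c ∈ cs, ∃ a ∈ r.pos, RTree.label c = Sum.inl a)
      (hrec : ∀ c ∈ cs, IsAOTNode P X Z c) :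
      IsAOTNode P X Z (.node (.inr r) cs)

/-- Minimum of a list of naturals (0 for the empty list; only used on nonempty
lists of children weights). -/
def listMin : List ℕ → ℕ
  | [] => 0
  | a :: l => l.foldr min a

/-- The weight function `W_T`: an atom (or-) vertex gets the minimum of its
children's weights, a rule (and-) vertex gets `1` plus the sum of its children's
weights (so leaves, being rule vertices, have weight 1). -/
def weightT {α ρ : Type} : RTree (α ⊕ ρ) → ℕ
  | .node (.inl _) cs => listMin (cs.attach.map (fun c => weightT c.1))
  | .node (.inr _) cs => 1 + (cs.attach.map (fun c => weightT c.1)).sum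
decreasing_by
  all_goals (have := List.sizeOf_lt_of_mem c.2; simp only [RTree.node.sizeOf_spec]; omega)

/-- The number of rule (and-) vertices of a tree. -/
def ruleCount {α ρ : Type} : RTree (α ⊕ ρ) → ℕ
  | .node (.inl _) cs => (cs.attach.map (fun c => ruleCount c.1)).sum
  | .node (.inr _) cs => 1 + (cs.attach.map (fun c => ruleCount c.1)).sum
decreasing_by
  all_goals (have := List.sizeOf_lt_of_mem c.2; simp only [RTree.node.sizeOf_spec]; omega)

/-- `SolOf S T`: `S` is an explanation tree (solution subtree) in the and-or tree
`T`: it has the same root label, each atom (or-) vertex of `S` keeps exactly one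
of the children it has in `T`, and each rule (and-) vertex keeps all of its
children. -/
inductive SolOf {α ρ : Type} : RTree (α ⊕ ρ) → RTree (α ⊕ ρ) → Prop
  | atom {a : α} {cs : List (RTree (α ⊕ ρ))} {c s : RTree (α ⊕ ρ)} :
      c ∈ cs → SolOf s c → SolOf (.node (.inl a) [s]) (.node (.inl a) cs)
  | rule {r : ρ} {cs ss : List (RTree (α ⊕ ρ))} :
      List.Forall₂ SolOf ss cs → SolOf (.node (.inr r) ss) (.node (.inr r) cs)

/-- `MinSolOf S T`: the explanation tree obtained by recursively selecting, at
each atom vertex, a child of minimum `weightT`-weight, and at each rule vertex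
all children. -/
inductive MinSolOf {α ρ : Type} : RTree (α ⊕ ρ) → RTree (α ⊕ ρ) → Prop
  | atom {a : α} {cs : List (RTree (α ⊕ ρ))} {c s : RTree (α ⊕ ρ)} :
      c ∈ cs → (∀ c' ∈ cs, weightT c ≤ weightT c') → MinSolOf s c →
      MinSolOf (.node (.inl a) [s]) (.node (.inl a) cs)
  | rule {r : ρ} {cs ss : List (RTree (α ⊕ ρ))} :
      List.Forall₂ MinSolOf ss cs → MinSolOf (.node (.inr r) ss) (.node (.inr r) cs)


/-!
Both claims follow by induction on the tree, comparing `ruleCount` with `weightT` vertex by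
vertex. At a rule vertex both are `1` plus a sum over the same children. At an atom vertex an
explanation tree keeps a single child, whose weight is at least the minimum `weightT` takes
there, with equality exactly when the child is of minimum weight. Hence every explanation tree
has at least `W_T(root)` rule vertices, and a min-weight selection has exactly that many.
-/

theorem listMin_eq_min : ∀ {l : List ℕ} (hl : l ≠ []), listMin l = l.min hl
  | a :: l, _ => by
    induction l generalizing a with
    | nil => rfl
    | cons b t ih =>
      rw [listMin, List.foldr_cons, ← listMin, ih a (List.cons_ne_nil a t), List.min_cons_cons,
        List.min_cons, List.min_cons]
      cases t.min? <;> simp only [Option.elim] <;> omega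

theorem listMin_le_of_mem {l : List ℕ} {a : ℕ} (ha : a ∈ l) : listMin l ≤ a :=
  listMin_eq_min (List.ne_nil_of_mem ha) ▸ List.min_le_of_mem ha

theorem listMin_eq_iff {l : List ℕ} {a : ℕ} (hl : l ≠ []) :
    listMin l = a ↔ a ∈ l ∧ ∀ b ∈ l, a ≤ b :=
  listMin_eq_min hl ▸ List.min_eq_iff hl

theorem List.exists_mem_forall_le_of_ne_nil {β γ : Type*} [LinearOrder γ] (f : β → γ)
    {l : List β} (hl : l ≠ []) : ∃ c ∈ l, ∀ c' ∈ l, f c ≤ f c' := by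
  have hl' : l.map f ≠ [] := by simpa using hl
  obtain ⟨c, hc, hfc⟩ := List.mem_map.1 (List.min_mem hl')
  exact ⟨c, hc, fun c' hc' => hfc ▸ List.min_le_of_mem (List.mem_map_of_mem hc')⟩

theorem List.Forall₂.imp_of_mem_right {β γ : Type*} {R S : β → γ → Prop} {l₁ : List β}
    {l₂ : List γ} (H : ∀ a, ∀ b ∈ l₂, R a b → S a b) (h : List.Forall₂ R l₁ l₂) :
    List.Forall₂ S l₁ l₂ := by
  rw [List.forall₂_iff_zip] at h ⊢
  exact ⟨h.1, fun hab => H _ _ (List.of_mem_zip hab).2 (h.2 hab)⟩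

theorem List.exists_forall₂_of_forall_exists {β γ : Type*} {R : β → γ → Prop} :
    ∀ {l : List γ}, (∀ c ∈ l, ∃ s, R s c) → ∃ ss, List.Forall₂ R ss l
  | [], _ => ⟨[], .nil⟩
  | c :: l, h => by
    obtain ⟨s, hs⟩ := h c List.mem_cons_self
    obtain ⟨ss, hss⟩ := exists_forall₂_of_forall_exists fun c hc => h c (List.mem_cons_of_mem _ hc)
    exact ⟨s :: ss, .cons hs hss⟩

namespace RTree

theorem induction {L : Type} {motive : RTree L → Prop}
    (node : ∀ l cs, (∀ c ∈ cs, motive c) → motive (node l cs)) : ∀ t, motive t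
  | .node l cs => node l cs fun c _ => RTree.induction node c
decreasing_by have := List.sizeOf_lt_of_mem ‹c ∈ cs›; simp only [RTree.node.sizeOf_spec]; omega

end RTree

section
variable {α ρ : Type}

theorem weightT_inl (a : α) (cs : List (RTree (α ⊕ ρ))) :
    weightT (.node (.inl a) cs) = listMin (cs.map weightT) := by
  simp [weightT]

theorem weightT_inr (r : ρ) (cs : List (RTree (α ⊕ ρ))) :
    weightT (.node (.inr r) cs) = 1 + (cs.map weightT).sum := by
  simp [weightT]

theorem ruleCount_inl (a : α) (cs : List (RTree (α ⊕ ρ))) :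
    ruleCount (.node (.inl a) cs) = (cs.map ruleCount).sum := by
  simp [ruleCount]

theorem ruleCount_inr (r : ρ) (cs : List (RTree (α ⊕ ρ))) :
    ruleCount (.node (.inr r) cs) = 1 + (cs.map ruleCount).sum := by
  simp [ruleCount]

theorem MinSolOf.solOf {S T : RTree (α ⊕ ρ)} (h : MinSolOf S T) : SolOf S T := by
  induction T using RTree.induction generalizing S with
  | node l cs ih =>
    cases h with
    | atom hc _ hs => exact .atom hc (ih _ hc hs)
    | rule h => exact .rule (h.imp_of_mem_right fun s c hc => ih c hc)

theorem MinSolOf.ruleCount_eq {S T : RTree (α ⊕ ρ)} (h : MinSolOf S T) :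
    ruleCount S = weightT T := by
  induction T using RTree.induction generalizing S with
  | node l cs ih =>
    cases h with
    | atom hc hmin hs =>
      rw [ruleCount_inl, weightT_inl, List.map_singleton, List.sum_singleton, ih _ hc hs, eq_comm,
        listMin_eq_iff (by simpa using List.ne_nil_of_mem hc)]
      exact ⟨List.mem_map_of_mem hc, List.forall_mem_map.2 hmin⟩
    | rule h =>
      rw [ruleCount_inr, weightT_inr]
      congr 2
      rw [← List.forall₂_eq_eq_eq, List.forall₂_map_left_iff, List.forall₂_map_right_iff]
      exact h.imp_of_mem_right fun s c hc => ih c hc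

theorem SolOf.weightT_le_ruleCount {S T : RTree (α ⊕ ρ)} (h : SolOf S T) :
    weightT T ≤ ruleCount S := by
  induction T using RTree.induction generalizing S with
  | node l cs ih =>
    cases h with
    | atom hc hs =>
      rw [ruleCount_inl, weightT_inl, List.map_singleton, List.sum_singleton]
      exact (listMin_le_of_mem (List.mem_map_of_mem hc)).trans (ih _ hc hs)
    | rule h =>
      rw [ruleCount_inr, weightT_inr]
      refine Nat.add_le_add_left (List.Forall₂.sum_le_sum ?_) 1
      rw [List.forall₂_map_left_iff, List.forall₂_map_right_iff]
      exact (h.imp_of_mem_right fun s c hc => ih c hc).flip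

end

theorem IsAOTNode.exists_minSolOf {α : Type} {P : Set (Rule α)} {X Z : Set α}
    {T : RTree (α ⊕ Rule α)} (hT : IsAOTNode P X Z T) : ∃ S, MinSolOf S T := by
  induction hT with
  | atom _ hne _ _ _ ih =>
    obtain ⟨c, hc, hmin⟩ := List.exists_mem_forall_le_of_ne_nil weightT hne
    obtain ⟨s, hs⟩ := ih c hc
    exact ⟨_, .atom hc hmin hs⟩
  | rule _ _ _ ih =>
    obtain ⟨ss, hss⟩ := List.exists_forall₂_of_forall_exists ih
    exact ⟨_, .rule hss⟩

theorem minWeight_extraction_sound_general {α : Type} (P : Set (Rule α)) (X : Set α)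
    (T : RTree (α ⊕ Rule α)) (hT : IsAOTNode P X ∅ T) :
    (∃ S, MinSolOf S T) ∧
    ∀ S, MinSolOf S T →
      SolOf S T ∧ ruleCount S = weightT T ∧
      ∀ S', SolOf S' T → ruleCount S ≤ ruleCount S' :=
  ⟨hT.exists_minSolOf, fun _ hS =>
    ⟨hS.solOf, hS.ruleCount_eq, fun _ hS' => hS.ruleCount_eq ▸ hS'.weightT_le_ruleCount⟩⟩

/-- Soundness of min-weight extraction: a min-weight selection exists, any
min-weight selection is an explanation tree whose number of rule vertices equals
`W_T(root)`, and hence it is a shortest explanation. -/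
theorem minWeight_extraction_sound {α : Type} (P : Set (Rule α)) (X : Set α) (p : α)
    (T : RTree (α ⊕ Rule α)) (hT : IsAOTNode P X ∅ T)
    (hroot : RTree.label T = Sum.inl p) :
    (∃ S, MinSolOf S T) ∧
    ∀ S, MinSolOf S T →
      SolOf S T ∧ ruleCount S = weightT T ∧
      ∀ S', SolOf S' T → ruleCount S ≤ ruleCount S' :=
  minWeight_extraction_sound_general P X T hT
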